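/- An A-linear functional f : A → A on a C*-algebra A considered as a Hilbert C*-module over itself is locally adjointable if and only if it is adjointable. -/

import Mathlib

open scoped ComplexOrder RightActions InnerProductSpace MultiplierAlgebra
open Filter

noncomputable section

/-- The (right) Hilbert C⋆-module class `CStarModule` as it was in Mathlib of December 2024
(inner product `A`-linear on the right in the second variable for the right action of `Aᵐᵒᵖ`). -/
class CStarModuleRight (A : outParam <| Type*) (E : Type*) [NonUnitalSemiring A] [StarRing A]
    [Module ℂ A] [AddCommGroup E] [Module ℂ E] [PartialOrder A] [SMul Aᵐᵒᵖ E] [Norm A] [Norm E]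
    extends Inner A E where
  inner_add_right {x} {y} {z} : inner x (y + z) = inner x y + inner x z
  inner_self_nonneg {x} : 0 ≤ inner x x
  inner_self {x} : inner x x = 0 ↔ x = 0
  inner_op_smul_right {a : A} {x y : E} : inner x (MulOpposite.op a • y) = inner x y * a
  inner_smul_right_complex {z : ℂ} {x} {y} : inner x (z • y) = z • inner x y
  star_inner x y : star (inner x y) = inner y x
  norm_eq_sqrt_norm_inner_self x : ‖x‖ = √‖inner x x‖

variable {A : Type*} [NonUnitalCStarAlgebra A] [PartialOrder A] [StarOrderedRing A]

/-- The old Mathlib instance: `A` as a right Hilbert module over itself, `⟪x, y⟫ = x⋆ * y`. -/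
instance CStarModuleRight.instSelf : CStarModuleRight A A where
  inner x y := star x * y
  inner_add_right := mul_add _ _ _
  inner_self_nonneg := star_mul_self_nonneg _
  inner_self := CStarRing.star_mul_self_eq_zero_iff _
  inner_op_smul_right := (mul_assoc _ _ _).symm
  inner_smul_right_complex := mul_smul_comm _ _ _
  star_inner x y := by simp [star_mul]
  norm_eq_sqrt_norm_inner_self x := by
    rw [CStarRing.norm_star_mul_self, Real.sqrt_mul_self (norm_nonneg _)]

/-- A state on a C⋆-algebra: a positive continuous linear functional of norm one. -/
def IsState (φ : A →L[ℂ] ℂ) : Prop :=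
  (∀ a : A, 0 ≤ φ (star a * a)) ∧ ‖φ‖ = 1

variable {E : Type*} [NormedAddCommGroup E] [NormedSpace ℂ E] [SMul Aᵐᵒᵖ E] [CStarModuleRight A E]

/-- `f : E → A` is `A`-linear; together with continuity and `ℂ`-linearity this says that `f`
is a bounded `A`-linear functional on the Hilbert C⋆-module `E`. -/
def IsALinear (f : E →L[ℂ] A) : Prop := ∀ (x : E) (a : A), f (x <• a) = f x * a

/-- A `*`-`N⁰`-admissible system of `A`-linear functionals: each has norm at most one, and for
every `x ∈ N⁰` the series `Σᵢ (fᵢ x)* (fᵢ x)` is norm convergent with partial sums bounded by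
`⟪x, x⟫`. -/
def StarAdmissible (N0 : Set E) (f : ℕ → E →L[ℂ] A) : Prop :=
  (∀ i, IsALinear (f i)) ∧ (∀ i, ‖f i‖ ≤ 1) ∧
    ∀ x ∈ N0, (∀ n : ℕ, ∑ i ∈ Finset.range n, star (f i x) * f i x ≤ ⟪x, x⟫_A) ∧
      Summable fun i => star (f i x) * f i x

/-- An `N⁰`-admissible system of elements of `E`: each has norm at most one and for every
`x ∈ N⁰` the series `Σᵢ ⟪x, xᵢ⟫⟪xᵢ, x⟫` converges with partial sums bounded by `⟪x, x⟫`. -/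
def Admissible (N0 : Set E) (X : ℕ → E) : Prop :=
  (∀ i, ‖X i‖ ≤ 1) ∧
    ∀ x ∈ N0, (∀ n : ℕ, ∑ i ∈ Finset.range n, ⟪x, X i⟫_A * ⟪X i, x⟫_A ≤ ⟪x, x⟫_A) ∧
      Summable fun i => ⟪x, X i⟫_A * ⟪X i, x⟫_A

/-- The pseudometric `d_{F,Φ}` associated with a system of functionals `f` and a sequence of
states `Φ`: `d_{F,Φ}(x,y)² = sup_k Σ_{i ≥ k} |φ_k (f_i (x - y))|²`. -/
def dF (f : ℕ → E →L[ℂ] A) (Φ : ℕ → A →L[ℂ] ℂ) (x y : E) : ℝ :=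
  Real.sqrt (⨆ k : ℕ, ∑' i : ℕ, ‖Φ k (f (k + i) (x - y))‖ ^ 2)

/-- The pseudometric `d_{X,Φ}` associated with a system of elements `X` and a sequence of
states `Φ`: `d_{X,Φ}(x,y)² = sup_k Σ_{i ≥ k} |φ_k ⟪x - y, x_i⟫|²`. -/
def dX (X : ℕ → E) (Φ : ℕ → A →L[ℂ] ℂ) (x y : E) : ℝ :=
  Real.sqrt (⨆ k : ℕ, ∑' i : ℕ, ‖Φ k (⟪x - y, X (k + i)⟫_A)‖ ^ 2)

/-- `Y` is totally bounded w.r.t. the pseudometric `d`: for each `ε > 0` there is a finite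
`ε`-net in `Y` consisting of elements of `Y`. -/
def TotBddWrt (Y : Set E) (d : E → E → ℝ) : Prop :=
  ∀ ε > (0 : ℝ), ∃ t : Finset E, ↑t ⊆ Y ∧ ∀ y ∈ Y, ∃ z ∈ t, d z y < ε

/-- An operator `g : A → E` is adjointable, with adjoint an `A`-functional `gs` on `E`:
`⟪g a, x⟫ = ⟪a, gs x⟫_A = a* ⬝ gs x`. -/
def AdjFromA (g : A →L[ℂ] E) : Prop :=
  ∃ gs : E →L[ℂ] A, ∀ (a : A) (x : E), ⟪g a, x⟫_A = star a * gs x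

/-- An `A`-functional `h : A → A` is adjointable: there is `hs : A → A` with
`⟪hs a, b⟫ = ⟪a, h b⟫`, i.e. `(hs a)* b = a* (h b)`. -/
def AdjFunctional (h : A →L[ℂ] A) : Prop :=
  ∃ hs : A →L[ℂ] A, ∀ a b : A, star (hs a) * b = star a * h b

/-- A functional `f : E → A` is locally adjointable if for every adjointable `A`-linear
operator `g : A → E` the composition `f ∘ g : A → A` is an adjointable functional. -/
def LocAdj (f : E →L[ℂ] A) : Prop :=
  ∀ g : A →L[ℂ] E, (∀ a b : A, g (a * b) = g a <• b) → AdjFromA g →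
    AdjFunctional (f.comp g)

/-- A functional `f : E → A` is represented by a (modular) multiplier of `E`: for every
`a ∈ A` the functional `x ↦ a* (f x)` is represented by an element of `E` (this encodes
`f ⬝ a ∈ E ⊆ M(E)`, using `E = M(E)A`). -/
def OuterRepr (f : E →L[ℂ] A) : Prop :=
  ∀ a : A, ∃ z : E, ∀ y : E, star a * f y = ⟪z, y⟫_A

/-- The Hilbert C⋆-module `E` is countably generated: there is a sequence whose set of
`A`-linear combinations is dense. -/
def CountGen (A : Type*) (E : Type*) [NonUnitalCStarAlgebra A] [PartialOrder A]
    [StarOrderedRing A] [NormedAddCommGroup E] [NormedSpace ℂ E] [SMul Aᵐᵒᵖ E]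
    [CStarModuleRight A E] : Prop :=
  ∃ g : ℕ → E,
    closure (↑(Submodule.span ℂ (Set.range g ∪ {y | ∃ i, ∃ a : A, y = g i <• a})) : Set E)
      = Set.univ

/-- `F : M → E` is `A`-compact: it is a norm limit of finite sums of the elementary operators
`x ↦ y ⬝ ⟪z, x⟫`. -/
def ACompact {M : Type*} [NormedAddCommGroup M] [NormedSpace ℂ M] [SMul Aᵐᵒᵖ M]
    [CStarModuleRight A M] (F : M →L[ℂ] E) : Prop :=
  ∀ ε > (0 : ℝ), ∃ (n : ℕ) (y : Fin n → E) (z : Fin n → M),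
    ∀ x : M, ‖F x - ∑ i, y i <• ⟪z i, x⟫_A‖ ≤ ε * ‖x‖

theorem AdjFunctional.comp {f g : A →L[ℂ] A} (hf : AdjFunctional f)
    (hg : AdjFromA (E := A) g) : AdjFunctional (f.comp g) := by
  obtain ⟨fs, hfs⟩ := hf
  obtain ⟨gs, hgs⟩ := hg
  refine ⟨gs.comp fs, fun a b => ?_⟩
  calc star (gs (fs a)) * b = star (star b * gs (fs a)) := by rw [star_mul, star_star]
    _ = star (fs a) * g b := by rw [← hgs b (fs a), CStarModuleRight.star_inner]; rfl
    _ = star a * f (g b) := hfs a (g b)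

theorem adjFromA_id : AdjFromA (E := A) (ContinuousLinearMap.id ℂ A) :=
  ⟨ContinuousLinearMap.id ℂ A, fun _ _ => rfl⟩

theorem statement11_general (f : A →L[ℂ] A) :
    LocAdj (E := A) f ↔ AdjFunctional f := by
  refine ⟨fun hf => ?_, fun hf g _ hg => hf.comp hg⟩
  simpa only [ContinuousLinearMap.comp_id] using
    hf (ContinuousLinearMap.id ℂ A) (fun a b => (op_smul_eq_mul b a).symm) adjFromA_id

/-- An `A`-linear functional `f : A → A` on `A`, viewed as a Hilbert C⋆-module over itself, is
locally adjointable if and only if it is adjointable. -/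
theorem statement11 (f : A →L[ℂ] A) (hf : IsALinear (E := A) f) :
    LocAdj (E := A) f ↔ AdjFunctional f :=
  statement11_general f
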